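/- Let ε, δ ∈ (0,1) and let λ, b ≥ 1 be integers with λ ≤ d. If M ∈ ℝ^{m×d} is a random matrix that is a (λ, ε, δ/b)-Oblivious Subspace Embedding, then the block-diagonal matrix I_b ⊗ M ∈ ℝ^{mb×db} (equal, up to permutations of the rows and columns, to M ⊗ I_b) is a (λ, ε, δ)-Oblivious Subspace Embedding, where I_b is the b×b identity matrix and ⊗ is the Kronecker product. -/

import Mathlib

open MeasureTheory ProbabilityTheory Real
open scoped ENNReal NNReal

noncomputable section

instance matrixMeasurableSpace {ι κ : Type*} : MeasurableSpace (Matrix ι κ ℝ) :=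
  MeasurableSpace.pi

/-- `‖X‖_p = (𝔼 |X|^p)^(1/p)`, the `p`-th moment norm of a real random variable. -/
def pmom {Ω : Type*} [MeasureSpace Ω] (p : ℝ) (X : Ω → ℝ) : ℝ :=
  (∫ ω, |X ω| ^ p) ^ (1 / p)

/-- Squared Euclidean norm `‖x‖₂²` of a finitely supported real vector. -/
def sqNorm {ι : Type*} [Fintype ι] (x : ι → ℝ) : ℝ := ∑ i, x i ^ 2

/-- Euclidean norm `‖x‖₂`. -/
def l2norm {ι : Type*} [Fintype ι] (x : ι → ℝ) : ℝ := Real.sqrt (sqNorm x)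

/-- Frobenius norm of a matrix. -/
def frobNorm {ι κ : Type*} [Fintype ι] [Fintype κ] (A : Matrix ι κ ℝ) : ℝ :=
  Real.sqrt (∑ i, ∑ j, A i j ^ 2)

/-- Operator (spectral) norm of a matrix. -/
def opNorm {ι κ : Type*} [Fintype ι] [Fintype κ] (A : Matrix ι κ ℝ) : ℝ :=
  sSup ((fun x => l2norm (A.mulVec x)) '' {x | l2norm x ≤ 1})

/-- The Strong `(ε,δ)`-JL Moment Property of a random matrix. -/
def StrongJL {Ω : Type*} [MeasureSpace Ω] {ι κ : Type*} [Fintype ι] [Fintype κ]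
    (ε δ : ℝ) (M : Ω → Matrix ι κ ℝ) : Prop :=
  ∀ x : κ → ℝ, sqNorm x = 1 →
    (∫ ω, sqNorm ((M ω).mulVec x)) = 1 ∧
    ∀ p : ℝ, 2 ≤ p → p ≤ Real.log (1 / δ) →
      pmom p (fun ω => sqNorm ((M ω).mulVec x) - 1)
        ≤ ε / Real.exp 1 * Real.sqrt (p / Real.log (1 / δ))

/-- The `(ε,δ,p)`-JL Moment Property of a random matrix. -/
def JLMoment {Ω : Type*} [MeasureSpace Ω] {ι κ : Type*} [Fintype ι] [Fintype κ]
    (ε δ p : ℝ) (M : Ω → Matrix ι κ ℝ) : Prop :=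
  ∀ x : κ → ℝ, sqNorm x = 1 →
    pmom p (fun ω => sqNorm ((M ω).mulVec x) - 1) ≤ ε * δ ^ (1 / p)

/-- `(λ,ε,δ)`-Oblivious Subspace Embedding. -/
def OSE {Ω : Type*} [MeasureSpace Ω] {ι κ : Type*} [Fintype ι] [Fintype κ]
    (lam : ℕ) (ε δ : ℝ) (M : Ω → Matrix ι κ ℝ) : Prop :=
  ∀ V : Submodule ℝ (κ → ℝ), Module.finrank ℝ V = lam →
    ENNReal.ofReal (1 - δ) ≤
      volume {ω | ∀ x ∈ V, |l2norm ((M ω).mulVec x) - l2norm x| ≤ ε * l2norm x}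

/-- The law of a Rademacher random variable: uniform on `{-1, 1}`. -/
def radMeasure : Measure ℝ :=
  (2 : ℝ≥0∞)⁻¹ • Measure.dirac 1 + (2 : ℝ≥0∞)⁻¹ • Measure.dirac (-1)

/-! Project a `λ`-dimensional subspace `V` of `ℝ^(b × d)` onto each of the `b` blocks and
enlarge each projection to a `λ`-dimensional subspace `Wᵢ` of `ℝ^d`. By the union bound over
the `b` failure events, each of probability at most `δ / b`, the matrix `M` embeds every `Wᵢ`
with probability at least `1 - δ`. On that event every block `xᵢ` of `x ∈ V` satisfies
`(1 - ε)² ‖xᵢ‖² ≤ ‖M xᵢ‖² ≤ (1 + ε)² ‖xᵢ‖²`, and since `‖(I_b ⊗ M) x‖² = ∑ᵢ ‖M xᵢ‖²`,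
summing over the blocks gives the same bounds for `x`. -/

open Module

lemma Submodule.exists_le_finrank_eq {K E : Type*} [Field K] [AddCommGroup E] [Module K E]
    [FiniteDimensional K E] (n : ℕ) (V : Submodule K E) (hV : finrank K V ≤ n)
    (hn : n ≤ finrank K E) : ∃ W : Submodule K E, V ≤ W ∧ finrank K W = n := by
  induction n with
  | zero => exact ⟨V, le_rfl, Nat.le_zero.mp hV⟩
  | succ n ih =>
    rcases hV.eq_or_lt with hV | hV
    · exact ⟨V, le_rfl, hV⟩
    obtain ⟨W, hVW, hW⟩ := ih (Nat.lt_succ_iff.mp hV) (Nat.le_of_succ_le hn)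
    obtain ⟨v, hv⟩ := Submodule.exists_of_finrank_lt W (by omega)
    have hvW : v ∉ W := by simpa using hv 1 one_ne_zero
    have hv0 : v ≠ 0 := fun h => hvW (h ▸ W.zero_mem)
    refine ⟨W ⊔ K ∙ v, hVW.trans le_sup_left, ?_⟩
    have hdim := Submodule.finrank_sup_add_finrank_inf_eq W (K ∙ v)
    rwa [((Submodule.disjoint_span_singleton' hv0).mpr hvW).eq_bot, finrank_bot, add_zero, hW,
      finrank_span_singleton hv0] at hdim

lemma MeasureTheory.ofReal_one_sub_le_measure_iInter {Ω ι : Type*} [MeasurableSpace Ω]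
    [Fintype ι] {μ : Measure Ω} [IsProbabilityMeasure μ] {A : ι → Set Ω}
    (hA : ∀ i, MeasurableSet (A i)) {t : ℝ} (ht : 0 ≤ t)
    (h : ∀ i, ENNReal.ofReal (1 - t) ≤ μ (A i)) :
    ENNReal.ofReal (1 - Fintype.card ι * t) ≤ μ (⋂ i, A i) := by
  have hcompl (i : ι) : μ (A i)ᶜ ≤ ENNReal.ofReal t := by
    rw [prob_compl_eq_one_sub (hA i), tsub_le_iff_right]
    calc (1 : ℝ≥0∞) = ENNReal.ofReal (t + (1 - t)) := by rw [add_sub_cancel, ENNReal.ofReal_one]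
      _ ≤ ENNReal.ofReal t + μ (A i) := ENNReal.ofReal_add_le.trans (by gcongr; exact h i)
  have hunion : μ (⋂ i, A i)ᶜ ≤ ENNReal.ofReal (Fintype.card ι * t) := by
    rw [Set.compl_iInter, ENNReal.ofReal_mul (Nat.cast_nonneg _), ENNReal.ofReal_natCast]
    calc μ (⋃ i, (A i)ᶜ) ≤ ∑ i, μ (A i)ᶜ := measure_iUnion_fintype_le μ _
      _ ≤ ∑ _i : ι, ENNReal.ofReal t := Finset.sum_le_sum fun i _ => hcompl i
      _ = Fintype.card ι * ENNReal.ofReal t := by simp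
  calc ENNReal.ofReal (1 - Fintype.card ι * t)
      = 1 - ENNReal.ofReal (Fintype.card ι * t) := by
        rw [ENNReal.ofReal_sub _ (by positivity), ENNReal.ofReal_one]
    _ ≤ 1 - μ (⋂ i, A i)ᶜ := tsub_le_tsub_left hunion 1
    _ = μ (⋂ i, A i) := by
        rw [prob_compl_eq_one_sub (MeasurableSet.iInter hA),
          ENNReal.sub_sub_cancel ENNReal.one_ne_top prob_le_one]

lemma Real.abs_sqrt_sub_sqrt_le_mul_iff {ε a c : ℝ} (hε0 : 0 ≤ ε) (hε1 : ε ≤ 1) (ha : 0 ≤ a)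
    (hc : 0 ≤ c) :
    |√c - √a| ≤ ε * √a ↔ (1 - ε) ^ 2 * a ≤ c ∧ c ≤ (1 + ε) ^ 2 * a := by
  have hlower : -(ε * √a) ≤ √c - √a ↔ (1 - ε) * √a ≤ √c := by constructor <;> intro <;> linarith
  have hupper : √c - √a ≤ ε * √a ↔ √c ≤ (1 + ε) * √a := by constructor <;> intro <;> linarith
  rw [abs_le, hlower, hupper, Real.le_sqrt (by positivity) hc,
    Real.sqrt_le_left (by positivity), mul_pow, mul_pow, Real.sq_sqrt ha]

lemma sqNorm_nonneg {ι : Type*} [Fintype ι] (x : ι → ℝ) : 0 ≤ sqNorm x :=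
  Finset.sum_nonneg fun _ _ => sq_nonneg _

lemma sqNorm_eq_sum_sqNorm_curry {β κ : Type*} [Fintype β] [Fintype κ] (x : β × κ → ℝ) :
    sqNorm x = ∑ i, sqNorm (fun l => x (i, l)) :=
  Fintype.sum_prod_type _

lemma one_kronecker_mulVec_apply {β ι κ : Type*} [Fintype β] [DecidableEq β] [Fintype κ]
    (A : Matrix ι κ ℝ) (x : β × κ → ℝ) (i : β) (j : ι) :
    (Matrix.kronecker (1 : Matrix β β ℝ) A).mulVec x (i, j) = A.mulVec (fun l => x (i, l)) j := by
  simp only [Matrix.mulVec, dotProduct, Matrix.kronecker, Matrix.kroneckerMap_apply,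
    Matrix.one_apply, ite_mul, one_mul, zero_mul, Fintype.sum_prod_type, Finset.sum_ite_irrel,
    Finset.sum_const_zero, Finset.sum_ite_eq, Finset.mem_univ, if_true]

lemma sqNorm_one_kronecker_mulVec {β ι κ : Type*} [Fintype β] [DecidableEq β] [Fintype ι]
    [Fintype κ] (A : Matrix ι κ ℝ) (x : β × κ → ℝ) :
    sqNorm ((Matrix.kronecker (1 : Matrix β β ℝ) A).mulVec x) =
      ∑ i, sqNorm (A.mulVec fun l => x (i, l)) := by
  simp only [sqNorm_eq_sum_sqNorm_curry, one_kronecker_mulVec_apply]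

section SubspaceEmbedding

variable {ι κ : Type*} [Fintype ι] [Fintype κ]

def IsSubspaceEmbedding (ε : ℝ) (V : Submodule ℝ (κ → ℝ)) (A : Matrix ι κ ℝ) : Prop :=
  ∀ x ∈ V, |l2norm (A.mulVec x) - l2norm x| ≤ ε * l2norm x

lemma IsSubspaceEmbedding.mono {ε : ℝ} {V W : Submodule ℝ (κ → ℝ)} {A : Matrix ι κ ℝ}
    (hW : IsSubspaceEmbedding ε W A) (hVW : V ≤ W) : IsSubspaceEmbedding ε V A :=
  fun x hx => hW x (hVW hx)

lemma isSubspaceEmbedding_iff_sqNorm {ε : ℝ} (hε0 : 0 ≤ ε) (hε1 : ε ≤ 1)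
    {V : Submodule ℝ (κ → ℝ)} {A : Matrix ι κ ℝ} :
    IsSubspaceEmbedding ε V A ↔ ∀ x ∈ V,
      (1 - ε) ^ 2 * sqNorm x ≤ sqNorm (A.mulVec x) ∧
        sqNorm (A.mulVec x) ≤ (1 + ε) ^ 2 * sqNorm x :=
  forall₂_congr fun x _ =>
    Real.abs_sqrt_sub_sqrt_le_mul_iff hε0 hε1 (sqNorm_nonneg x) (sqNorm_nonneg _)

lemma isClosed_setOf_isSubspaceEmbedding (ε : ℝ) (V : Submodule ℝ (κ → ℝ)) :
    IsClosed {A : Matrix ι κ ℝ | IsSubspaceEmbedding ε V A} := by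
  simp only [IsSubspaceEmbedding, Set.ofPred_forall]
  refine isClosed_biInter fun x _ => isClosed_le ?_ continuous_const
  unfold l2norm sqNorm
  fun_prop

lemma IsSubspaceEmbedding.one_kronecker {β : Type*} [Fintype β] [DecidableEq β] {ε : ℝ}
    (hε0 : 0 ≤ ε) (hε1 : ε ≤ 1) {V : Submodule ℝ (β × κ → ℝ)} {A : Matrix ι κ ℝ}
    (hA : ∀ i, IsSubspaceEmbedding ε (V.map (LinearMap.funLeft ℝ ℝ (Prod.mk i))) A) :
    IsSubspaceEmbedding ε V (Matrix.kronecker (1 : Matrix β β ℝ) A) := by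
  rw [isSubspaceEmbedding_iff_sqNorm hε0 hε1]
  intro x hx
  have hblock (i : β) := (isSubspaceEmbedding_iff_sqNorm hε0 hε1).1 (hA i) _
    (Submodule.mem_map_of_mem (f := LinearMap.funLeft ℝ ℝ (Prod.mk i)) hx)
  simp only [sqNorm_one_kronecker_mulVec, sqNorm_eq_sum_sqNorm_curry x, Finset.mul_sum]
  exact ⟨Finset.sum_le_sum fun i _ => (hblock i).1, Finset.sum_le_sum fun i _ => (hblock i).2⟩

end SubspaceEmbedding

instance Matrix.borelSpace {ι κ : Type*} [Fintype ι] [Fintype κ] :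
    BorelSpace (Matrix ι κ ℝ) :=
  inferInstanceAs (BorelSpace (ι → κ → ℝ))

lemma OSE.mono {Ω : Type*} [MeasureSpace Ω] {ι κ : Type*} [Fintype ι] [Fintype κ]
    {lam : ℕ} {ε δ δ' : ℝ} {M : Ω → Matrix ι κ ℝ} (hM : OSE lam ε δ M) (hδ : δ ≤ δ') :
    OSE lam ε δ' M :=
  fun V hV => (ENNReal.ofReal_le_ofReal (by linarith)).trans (hM V hV)

theorem OSE.one_kronecker {Ω : Type*} [MeasureSpace Ω]
    [IsProbabilityMeasure (volume : Measure Ω)] {β ι κ : Type*} [Fintype β] [DecidableEq β]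
    [Fintype ι] [Fintype κ] {lam : ℕ} {ε t : ℝ}
    (hε0 : 0 ≤ ε) (hε1 : ε ≤ 1) (ht : 0 ≤ t) (hlam : lam ≤ Fintype.card κ)
    {M : Ω → Matrix ι κ ℝ} (hM_meas : Measurable M) (hM : OSE lam ε t M) :
    OSE lam ε (Fintype.card β * t) fun ω => Matrix.kronecker (1 : Matrix β β ℝ) (M ω) := by
  intro V hV
  have hW (i : β) : ∃ W : Submodule ℝ (κ → ℝ),
      V.map (LinearMap.funLeft ℝ ℝ (Prod.mk i)) ≤ W ∧ finrank ℝ W = lam :=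
    Submodule.exists_le_finrank_eq lam _ ((Submodule.finrank_map_le _ _).trans hV.le)
      (by rwa [Module.finrank_fintype_fun_eq_card])
  choose W hVW hW_dim using hW
  calc ENNReal.ofReal (1 - Fintype.card β * t)
      ≤ volume (⋂ i, {ω | IsSubspaceEmbedding ε (W i) (M ω)}) :=
        ofReal_one_sub_le_measure_iInter
          (fun i => hM_meas (isClosed_setOf_isSubspaceEmbedding ε (W i)).measurableSet) ht
          fun i => hM (W i) (hW_dim i)
    _ ≤ _ := measure_mono fun ω hω =>
        IsSubspaceEmbedding.one_kronecker hε0 hε1 fun i => (Set.mem_iInter.1 hω i).mono (hVW i)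

theorem ose_direct_sum_general
    {Ω : Type*} [MeasureSpace Ω] [IsProbabilityMeasure (volume : Measure Ω)]
    (ε δ : ℝ) (hε : ε ∈ Set.Ioo (0 : ℝ) 1) (hδ : δ ∈ Set.Ioo (0 : ℝ) 1)
    (lam b : ℕ)
    (m d : ℕ) (hd : lam ≤ d)
    (M : Ω → Matrix (Fin m) (Fin d) ℝ)
    (hMmeas : Measurable M)
    (hM : OSE lam ε (δ / b) M) :
    OSE lam ε δ (fun ω => Matrix.kronecker (1 : Matrix (Fin b) (Fin b) ℝ) (M ω)) := by
  have hδb : (b : ℝ) * (δ / b) ≤ δ := by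
    rcases Nat.eq_zero_or_pos b with rfl | hb
    · simpa using hδ.1.le
    · rw [mul_div_cancel₀ _ (by positivity)]
  have hkron := OSE.one_kronecker (β := Fin b) hε.1.le hε.2.le (div_nonneg hδ.1.le b.cast_nonneg)
    (by rwa [Fintype.card_fin]) hMmeas hM
  rw [Fintype.card_fin] at hkron
  exact hkron.mono hδb

/-- a direct sum (block diagonal Kronecker product with the
identity) of an oblivious subspace embedding is an oblivious subspace
embedding, with failure probability multiplied by the number of blocks. -/
theorem ose_direct_sum
    {Ω : Type*} [MeasureSpace Ω] [IsProbabilityMeasure (volume : Measure Ω)]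
    (ε δ : ℝ) (hε : ε ∈ Set.Ioo (0 : ℝ) 1) (hδ : δ ∈ Set.Ioo (0 : ℝ) 1)
    (lam b : ℕ) (hlam : 1 ≤ lam) (hb : 1 ≤ b)
    (m d : ℕ) (hd : lam ≤ d)
    (M : Ω → Matrix (Fin m) (Fin d) ℝ)
    (hMmeas : Measurable M)
    (hM : OSE lam ε (δ / b) M) :
    OSE lam ε δ (fun ω => Matrix.kronecker (1 : Matrix (Fin b) (Fin b) ℝ) (M ω)) :=
  ose_direct_sum_general ε δ hε hδ lam b m d hd M hMmeas hM
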